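/- The function z ↦ -σ''(z), the negative of the second derivative of the sigmoid function, is monotonically increasing on the interval [-1, 1]. -/

import Mathlib

/-!
With `s = σ(z)` we have `-σ''(z) = s(1 - s)(2s - 1)`. Since `σ` is increasing and `e < 3`,
`σ` maps `[-1, 1]` into `[1/4, 3/4]`, and on that interval the cubic is increasing: its
difference quotient is `1/2 - 2(u² + uv + v²) ≥ 1/8` for `u, v ∈ [-1/4, 1/4]` the offsets from `1/2`.
-/

/-- The sigmoid function `σ(x) = 1/(1+exp(-x))`. -/
noncomputable def sigmoid (x : ℝ) : ℝ := 1 / (1 + Real.exp (-x))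

/-- The second derivative of the sigmoid: `σ''(z) = σ(z)(1-σ(z))(1-2σ(z))`. -/
noncomputable def sigmoid'' (z : ℝ) : ℝ := sigmoid z * (1 - sigmoid z) * (1 - 2 * sigmoid z)

open Set

theorem sigmoid_eq_real_sigmoid : sigmoid = Real.sigmoid :=
  funext fun _ => one_div _

theorem monotoneOn_cubic :
    MonotoneOn (fun s : ℝ => s * (1 - s) * (2 * s - 1)) (Icc (1 / 4) (3 / 4)) := by
  intro a ⟨ha₁, ha₂⟩ b ⟨hb₁, hb₂⟩ hab
  have factor : b * (1 - b) * (2 * b - 1) - a * (1 - a) * (2 * a - 1) =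
      (b - a) * (1 / 2 - 2 * ((a - 1 / 2) ^ 2 + (a - 1 / 2) * (b - 1 / 2) + (b - 1 / 2) ^ 2)) := by
    ring
  have quadratic_le : (a - 1 / 2) ^ 2 + (a - 1 / 2) * (b - 1 / 2) + (b - 1 / 2) ^ 2 ≤ 3 / 16 := by
    nlinarith
  nlinarith

theorem Real.sigmoid_mapsTo_Icc : MapsTo Real.sigmoid (Icc (-1) 1) (Icc (1 / 4) (3 / 4)) := by
  have quarter_le : 1 / 4 ≤ Real.sigmoid (-1) := by
    rw [Real.sigmoid_def, neg_neg, le_inv_comm₀ (by norm_num) (by positivity)]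
    linarith [Real.exp_one_lt_three]
  intro x ⟨hx₁, hx₂⟩
  have lower := Real.sigmoid_le hx₁
  have upper := Real.sigmoid_le hx₂
  rw [← neg_neg (1 : ℝ), Real.sigmoid_neg] at upper
  constructor <;> linarith

/-- The function `z ↦ -σ''(z)` is monotonically increasing on the interval `[-1, 1]`. -/
theorem neg_sigmoid''_monotoneOn :
    MonotoneOn (fun z : ℝ => -(sigmoid'' z)) (Set.Icc (-1 : ℝ) 1) := by
  have neg_sigmoid''_eq : (fun z : ℝ => -(sigmoid'' z)) =
      (fun s : ℝ => s * (1 - s) * (2 * s - 1)) ∘ Real.sigmoid := by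
    ext z
    simp only [sigmoid'', sigmoid_eq_real_sigmoid, Function.comp]
    ring
  rw [neg_sigmoid''_eq]
  exact monotoneOn_cubic.comp (Real.sigmoid_monotone.monotoneOn _) Real.sigmoid_mapsTo_Icc
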